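/- Let (X,μ) be a probability space and α a countable measurable partition of X with H(α) < ∞. Then for every ε > 0 there exists δ > 0 such that: if ω = {X_L, X_S} is a two-atom measurable partition of X with μ(X_S) < δ, and ξ is the partition {X_L} ∪ {X_S ∩ A : A ∈ α}, then H(ξ) < ε. -/

import Mathlib

open MeasureTheory Filter Function Set
open scoped ENNReal symmDiff

namespace SoficEntropy

variable {X Y : Type*} [MeasurableSpace X] [MeasurableSpace Y] {G : Type*} [Group G]

/-- The entropy of a countable (ordered) partition `α` of `(X, μ)`:
`H(α) = -∑ᵢ μ(Aᵢ) log μ(Aᵢ)`, valued in `ℝ≥0∞`. -/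
noncomputable def entH (μ : Measure X) (α : ℕ → Set X) : ℝ≥0∞ :=
  ∑' i, ENNReal.ofReal (Real.negMulLog ((μ (α i)).toReal))

/-- Real-valued entropy (for finite-entropy partitions). -/
noncomputable def entHR (μ : Measure X) (α : ℕ → Set X) : ℝ := (entH μ α).toReal

open scoped Classical in
/-- The base entropy `H(κ)` of a probability measure: `-∑ κ{k} log κ{k}` if `κ` is supported
on a countable set, and `+∞` otherwise. -/
noncomputable def baseEnt {K : Type*} [MeasurableSpace K] (κ : Measure K) : ℝ≥0∞ :=
  if ∃ S : Set K, S.Countable ∧ κ Sᶜ = 0 then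
    ∑' k : K, ENNReal.ofReal (Real.negMulLog ((κ {k}).toReal))
  else ⊤

/-- `α : ℕ → Set X` is a countable ordered measurable partition of `(X,μ)`
(possibly with empty atoms). -/
def IsPart (μ : Measure X) (α : ℕ → Set X) : Prop :=
  (∀ i, MeasurableSet (α i)) ∧ Pairwise (Disjoint on α) ∧ μ (⋃ i, α i)ᶜ = 0

/-- A finite partition: all atoms with index `≥ u` are empty. -/
def IsFinPart (μ : Measure X) (α : ℕ → Set X) (u : ℕ) : Prop :=
  IsPart μ α ∧ ∀ i, u ≤ i → α i = ∅

/-- The join `α ∨ β` of two countable partitions, reindexed by `ℕ`. -/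
def pjoin (α β : ℕ → Set X) : ℕ → Set X :=
  fun n => α (Nat.unpair n).1 ∩ β (Nat.unpair n).2

/-- `α` refines `β` (i.e. `α ≥ β`) mod null sets: every atom of `α` is contained,
up to a `μ`-null set, in some atom of `β`. -/
def Refines (μ : Measure X) (α β : ℕ → Set X) : Prop :=
  ∀ i, ∃ j, μ (α i \ β j) = 0

/-- Equality of partitions mod null sets, expressed as mutual refinement. -/
def PEquiv (μ : Measure X) (α β : ℕ → Set X) : Prop :=
  Refines μ α β ∧ Refines μ β α

/-- The Rohlin distance `d(α,β) = H(α|β) + H(β|α) = 2H(α∨β) - H(α) - H(β)`. -/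
noncomputable def rdist (μ : Measure X) (α β : ℕ → Set X) : ℝ :=
  2 * entHR μ (pjoin α β) - entHR μ α - entHR μ β

/-- The image partition `f α` of a partition `α` under a map `f : X → X`. -/
def pmap (f : X → X) (α : ℕ → Set X) : ℕ → Set X := fun i => f '' α i

/-- The cell `A_φ = ⋂_{f ∈ F} f • A_{φ(f)}` of the join `α^F = ⋁_{f ∈ F} f α`,
for an action `T` of `G` on `X`. -/
def iCell (T : G → X → X) (α : ℕ → Set X) (F : Finset G) (φ : G → ℕ) : Set X :=
  ⋂ f ∈ F, T f '' α (φ f)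

/-- The join `α^F = ⋁_{g ∈ F} g α`, as an `ℕ`-indexed partition (its nonempty atoms are
exactly the cells `iCell T α F φ`). -/
noncomputable def pjoinF (T : G → X → X) (F : Finset G) (α : ℕ → Set X) : ℕ → Set X :=
  letI := Classical.decEq G
  fun n =>
    if (Denumerable.ofNat (List ℕ) n).length = F.card then
      iCell T α F (fun g => (Denumerable.ofNat (List ℕ) n).getD (F.toList.idxOf g) 0)
    else ∅

/-- `β^F` refines `α` mod null sets, i.e. `α ≤ β^F`:  each cell of the join `β^F` is
contained, up to a null set, in an atom of `α`. -/
def JoinRefines (μ : Measure X) (T : G → X → X) (β : ℕ → Set X) (F : Finset G)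
    (α : ℕ → Set X) : Prop :=
  ∀ φ : G → ℕ, ∃ i, μ (iCell T β F φ \ α i) = 0

/-- Adjacency in the (undirected) left Cayley graph of `(G,S)`: there is an edge between
`g` and `h` if `h = sg` or `g = sh` for some `s ∈ S`. -/
def cayleyAdj (S : Set G) (g h : G) : Prop := ∃ s ∈ S, h = s * g ∨ g = s * h

/-- A finite subset `F ⊆ G` is `S`-connected if the subgraph of the left Cayley graph of
`(G,S)` induced on `F` is connected. -/
def SConnected (S : Set G) (F : Finset G) : Prop :=
  F.Nonempty ∧ ∀ g ∈ F, ∀ h ∈ F, ∃ (n : ℕ) (p : ℕ → G), p 0 = g ∧ p n = h ∧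
    (∀ k ≤ n, p k ∈ F) ∧ ∀ k < n, p k = p (k + 1) ∨ cayleyAdj S (p k) (p (k + 1))

/-- A simple `S`-splitting of `α`: a partition of the form `α ∨ sβ` with `s ∈ S` and `β`
a coarsening of `α` (as elements of the space of partitions mod null sets). -/
def IsSimpleSplit (μ : Measure X) (T : G → X → X) (S : Set G) (α σ' : ℕ → Set X) : Prop :=
  ∃ s ∈ S, ∃ β : ℕ → Set X, IsPart μ β ∧ Refines μ α β ∧
    PEquiv μ σ' (pjoin α (pmap (T s) β))

/-- An `S`-splitting of `α`: a partition obtained from `α` by finitely many simple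
`S`-splittings. -/
def IsSplit (μ : Measure X) (T : G → X → X) (S : Set G) (α σ' : ℕ → Set X) : Prop :=
  ∃ (n : ℕ) (c : ℕ → ℕ → Set X), c 0 = α ∧ PEquiv μ (c n) σ' ∧
    (∀ k ≤ n, IsPart μ (c k)) ∧ ∀ k < n, IsSimpleSplit μ T S (c k) (c (k + 1))

/-- `α` and `β` are `S`-equivalent: there are finite `S`-connected sets `F₁, F₂ ∋ 1` with
`α ≤ β^{F₁}` and `β ≤ α^{F₂}`. -/
def SEquiv (μ : Measure X) (T : G → X → X) (S : Set G) (α β : ℕ → Set X) : Prop :=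
  ∃ F₁ F₂ : Finset G, (1 : G) ∈ F₁ ∧ (1 : G) ∈ F₂ ∧ SConnected S F₁ ∧ SConnected S F₂ ∧
    JoinRefines μ T β F₁ α ∧ JoinRefines μ T α F₂ β

/-- `T` is a measure-preserving action of `G` on `(X,μ)`. -/
def IsMPAction (μ : Measure X) (T : G → X → X) : Prop :=
  (∀ x, T 1 x = x) ∧ (∀ g h x, T (g * h) x = T g (T h x)) ∧
    ∀ g : G, MeasurePreserving (T g) μ μ

/-- `α` is a generating partition for the action `T` of `G` on `(X,μ)`: the smallest
`G`-invariant σ-algebra containing the atoms of `α` contains every measurable set up to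
null sets. -/
def IsGenerating (μ : Measure X) (T : G → X → X) (α : ℕ → Set X) : Prop :=
  ∀ A : Set X, MeasurableSet A →
    ∃ B : Set X,
      MeasurableSet[MeasurableSpace.generateFrom
        {s : Set X | ∃ (g : G) (i : ℕ), s = T g '' α i}] B ∧ μ (A ∆ B) = 0

/-! ### The sofic side -/

/-- The cell `B_φ = ⋂_{f ∈ F} σ(f) B_{φ(f)}` for a partition `β` of `{1,…,m}`. -/
def sCell {m : ℕ} (σ : G → Equiv.Perm (Fin m)) (β : ℕ → Set (Fin m)) (F : Finset G)
    (φ : G → ℕ) : Set (Fin m) :=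
  ⋂ f ∈ F, (σ f) '' β (φ f)

/-- Extension of a function on (the subtype of) `F` to all of `G`, by `0`. -/
noncomputable def ext0 (F : Finset G) (φ : {x // x ∈ F} → ℕ) : G → ℕ :=
  letI := Classical.decEq G
  fun g => if h : g ∈ F then φ ⟨g, h⟩ else 0

/-- `d_F(α, β) = ∑_{φ : F → ℕ} |μ(A_φ) - ζ(B_φ)|` where `ζ` is the uniform probability
measure on `{1,…,m}`. -/
noncomputable def dF {m : ℕ} (μ : Measure X) (T : G → X → X) (σ : G → Equiv.Perm (Fin m))
    (α : ℕ → Set X) (β : ℕ → Set (Fin m)) (F : Finset G) : ℝ≥0∞ :=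
  ∑' φ : {x // x ∈ F} → ℕ, ENNReal.ofReal
    |(μ (iCell T α F (ext0 F φ))).toReal - ((sCell σ β F (ext0 F φ)).ncard : ℝ) / (m : ℝ)|

/-- An ordered partition of `{1,…,m}` with (at most) `u` atoms. -/
def IsSPart {m : ℕ} (β : ℕ → Set (Fin m)) (u : ℕ) : Prop :=
  Pairwise (Disjoint on β) ∧ (⋃ i, β i) = Set.univ ∧ ∀ i, u ≤ i → β i = ∅

/-- `AP(σ, α : F, ε)`: the set of ordered partitions of `{1,…,m}` with the same number of
atoms as the finite partition `(α, u)` and with `d_F(α, β) ≤ ε`. -/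
def APset {m : ℕ} (μ : Measure X) (T : G → X → X) (σ : G → Equiv.Perm (Fin m))
    (α : ℕ → Set X) (u : ℕ) (F : Finset G) (ε : ℝ) : Set (ℕ → Set (Fin m)) :=
  {β | IsSPart β u ∧ dF μ T σ α β F ≤ ENNReal.ofReal ε}

/-- A map sequence for `G`: maps `σᵢ : G → Sym(mᵢ)` (not assumed homomorphisms) with
`mᵢ → ∞`. -/
structure MapSeq (G : Type*) where
  m : ℕ → ℕ
  sig : ∀ i, G → Equiv.Perm (Fin (m i))
  tend : Tendsto m atTop atTop

/-- `H(Σ, α : F, ε) = limsupᵢ (1/mᵢ) log |AP(σᵢ, α : F, ε)|`, with `log 0 = -∞`. -/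
noncomputable def HAP (μ : Measure X) (T : G → X → X) (ms : MapSeq G) (α : ℕ → Set X)
    (u : ℕ) (F : Finset G) (ε : ℝ) : EReal :=
  limsup (fun i =>
    if 0 < (APset μ T (ms.sig i) α u F ε).ncard then
      ((Real.log ((APset μ T (ms.sig i) α u F ε).ncard) / (ms.m i) : ℝ) : EReal)
    else ⊥) atTop

/-- `H(Σ, α : F) = lim_{ε → 0} H(Σ, α : F, ε) = inf_{ε > 0} H(Σ, α : F, ε)` for a finite
partition `(α, u)`. -/
noncomputable def HF (μ : Measure X) (T : G → X → X) (ms : MapSeq G) (α : ℕ → Set X)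
    (u : ℕ) (F : Finset G) : EReal :=
  ⨅ (ε : ℝ) (_ : 0 < ε), HAP μ T ms α u F ε

/-- A chain of the countable partition `α`: an increasing sequence of finite coarsenings
of `α` whose join is `α` (mod null sets). -/
structure PChain (μ : Measure X) (α : ℕ → Set X) where
  p : ℕ → ℕ → Set X
  u : ℕ → ℕ
  fin : ∀ n, IsFinPart μ (p n) (u n)
  coars : ∀ n, Refines μ α (p n)
  mono : ∀ n, Refines μ (p (n + 1)) (p n)
  gen : ∀ i, ∃ f : ℕ → ℕ, (∀ n, μ (α i \ p n (f n)) = 0) ∧ μ ((⋂ n, p n (f n)) \ α i) = 0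

/-- `H(Σ, α : F)` for a countable partition `α`: the infimum over chains of `α` of the
limit of `H(Σ, αₙ : F)`. -/
noncomputable def HFc (μ : Measure X) (T : G → X → X) (ms : MapSeq G) (α : ℕ → Set X)
    (F : Finset G) : EReal :=
  ⨅ c : PChain μ α, limsup (fun n => HF μ T ms (c.p n) (c.u n) F) atTop

/-- The mean `Σ`-entropy `h(Σ, α) = inf_F H(Σ, α : F)` of a partition. -/
noncomputable def hS (μ : Measure X) (T : G → X → X) (ms : MapSeq G) (α : ℕ → Set X) :
    EReal :=
  ⨅ F : Finset G, HFc μ T ms α F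

/-- The set `V(F)` of good points for a map `σ : G → Sym(m)` and finite `F ⊆ G`. -/
def Vset {m : ℕ} (σ : G → Equiv.Perm (Fin m)) (F : Finset G) : Set (Fin m) :=
  {v | (∀ f₁ ∈ F, ∀ f₂ ∈ F, σ f₁ (σ f₂ v) = σ (f₁ * f₂) v) ∧
      ∀ f₁ ∈ F, ∀ f₂ ∈ F, f₁ ≠ f₂ → σ f₁ v ≠ σ f₂ v}

/-- `σ` is an `(F,ε)`-approximation to `G`: `|V(F)| ≥ (1-ε) m`. -/
def IsApprox {m : ℕ} (σ : G → Equiv.Perm (Fin m)) (F : Finset G) (ε : ℝ) : Prop :=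
  (1 - ε) * (m : ℝ) ≤ ((Vset σ F).ncard : ℝ)

/-- A sofic approximation to `G`. -/
structure SoficApprox (G : Type*) [Group G] extends MapSeq G where
  Fs : ℕ → Finset G
  eps : ℕ → ℝ
  Fs_mono : ∀ i, Fs i ⊆ Fs (i + 1)
  Fs_cover : ∀ g : G, ∃ i, g ∈ Fs i
  eps_lim : Tendsto eps atTop (nhds 0)
  approx : ∀ i, IsApprox (sig i) (Fs i) (eps i)

/-- `G` is sofic if it admits a sofic approximation. -/
def IsSofic (G : Type*) [Group G] : Prop := Nonempty (SoficApprox G)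

/-! ### Bernoulli shifts and conjugacy -/

/-- The Bernoulli shift action of `G` on `K^G`: `(g x)(f) = x(g⁻¹ f)`. -/
def bshift (G : Type*) [Group G] {K : Type*} (g : G) (x : G → K) : G → K :=
  fun f => x (g⁻¹ * f)

/-- `ν` is the product measure `κ^G` on `K^G`. -/
def IsBernoulliMeasure {K : Type*} [MeasurableSpace K] (G : Type*) (κ : Measure K)
    (ν : Measure (G → K)) : Prop :=
  IsProbabilityMeasure ν ∧
    ∀ (J : Finset G) (s : G → Set K), (∀ g ∈ J, MeasurableSet (s g)) →
      ν {x : G → K | ∀ g ∈ J, x g ∈ s g} = ∏ g ∈ J, κ (s g)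

/-- Measure conjugacy along a group homomorphism `Φ : G₁ → G₂`: a bimeasurable,
measure-preserving bijection between invariant conull sets intertwining the actions
via `Φ`. -/
def MeasConjAlong {G₁ G₂ : Type*} (Φ : G₁ → G₂) (T₁ : G₁ → X → X) (T₂ : G₂ → Y → Y)
    (μ : Measure X) (ν : Measure Y) : Prop :=
  ∃ (X' : Set X) (Y' : Set Y) (φ : X → Y) (ψ : Y → X),
    MeasurableSet X' ∧ MeasurableSet Y' ∧ μ X'ᶜ = 0 ∧ ν Y'ᶜ = 0 ∧
    (∀ g, ∀ x ∈ X', T₁ g x ∈ X') ∧ (∀ g, ∀ y ∈ Y', T₂ g y ∈ Y') ∧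
    Measurable φ ∧ Measurable ψ ∧ MapsTo φ X' Y' ∧ MapsTo ψ Y' X' ∧
    (∀ x ∈ X', ψ (φ x) = x) ∧ (∀ y ∈ Y', φ (ψ y) = y) ∧
    Measure.map φ μ = ν ∧ ∀ g, ∀ x ∈ X', φ (T₁ g x) = T₂ (Φ g) (φ x)

/-- Measure conjugacy (isomorphism) of two `G`-systems. -/
def MeasConj {G : Type*} (T₁ : G → X → X) (T₂ : G → Y → Y) (μ : Measure X)
    (ν : Measure Y) : Prop :=
  MeasConjAlong id T₁ T₂ μ ν

/-- Conjugacy up to automorphisms: measure conjugacy along some group isomorphism. -/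
def AutConj {G₁ G₂ : Type*} [Group G₁] [Group G₂] (T₁ : G₁ → X → X) (T₂ : G₂ → Y → Y)
    (μ : Measure X) (ν : Measure Y) : Prop :=
  ∃ Φ : G₁ ≃* G₂, MeasConjAlong (⇑Φ) T₁ T₂ μ ν

/-- `G` is Ornstein: Bernoulli shifts over `G` with bases of equal entropy are
measurably conjugate. -/
def IsOrnstein.{u, v, w} (G : Type w) [Group G] : Prop :=
  ∀ (K : Type u) (L : Type v) [MeasurableSpace K] [StandardBorelSpace K]
    [MeasurableSpace L] [StandardBorelSpace L] (κ : Measure K) (lam : Measure L)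
    [IsProbabilityMeasure κ] [IsProbabilityMeasure lam],
    baseEnt κ = baseEnt lam →
    ∀ (ν : Measure (G → K)) (ρ : Measure (G → L)),
      IsBernoulliMeasure G κ ν → IsBernoulliMeasure G lam ρ →
      MeasConj (fun g (x : G → K) => bshift G g x) (fun g (x : G → L) => bshift G g x) ν ρ

universe uK uL uG

/-! With `η = negMulLog`, `H(ξ) = η(μ X_L) + ∑ₙ η(μ(X_S ∩ Aₙ))`. As `μ X_S → 0` the first term
tends to `η 1 = 0`, and so does each term of the series by continuity of `η` at `0`. Only finitely
many terms need this: `η` is increasing on `[0, e⁻¹]` and the atoms of `α` eventually have mass at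
most `e⁻¹`, so the tail of the series is dominated by the tail of the convergent series `H(α)`. -/

theorem negMulLog_le_negMulLog_of_le_exp_neg_one {x y : ℝ} (hx : 0 ≤ x) (hxy : x ≤ y)
    (hy : y ≤ Real.exp (-1)) : Real.negMulLog x ≤ Real.negMulLog y := by
  have := Real.mul_log_strictAntiOn.antitoneOn ⟨hx, hxy.trans hy⟩ ⟨hx.trans hxy, hy⟩ hxy
  simp only [Real.negMulLog_eq_neg]
  linarith

theorem tendsto_ofReal_negMulLog_toReal {ι : Type*} {l : Filter ι} {f : ι → ℝ≥0∞} {a : ℝ≥0∞}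
    (ha : a ≠ ⊤) (hf : Tendsto f l (nhds a)) :
    Tendsto (fun i => ENNReal.ofReal (Real.negMulLog (f i).toReal)) l
      (nhds (ENNReal.ofReal (Real.negMulLog a.toReal))) :=
  ENNReal.continuous_ofReal.continuousAt.tendsto.comp <|
    Real.continuous_negMulLog.continuousAt.tendsto.comp <| (ENNReal.tendsto_toReal ha).comp hf

theorem exists_pos_of_eventually_comap_nhds_zero {ι : Type*} {f : ι → ℝ≥0∞} {p : ι → Prop}
    (h : ∀ᶠ i in comap f (nhds 0), p i) :
    ∃ δ : ℝ, 0 < δ ∧ ∀ i, f i < ENNReal.ofReal δ → p i := by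
  obtain ⟨ε, hε, hsub⟩ := ENNReal.nhds_zero_basis.eventually_iff.1 (eventually_comap.1 h)
  obtain ⟨δ, -, hδ, hδε⟩ := ENNReal.lt_iff_exists_real_btwn.1 hε
  exact ⟨δ, ENNReal.ofReal_pos.1 hδ, fun i hi => hsub (hi.trans hδε) i rfl⟩

theorem entH_le_entH_of_le {μ : Measure X} {α β : ℕ → Set X} (hβα : ∀ n, μ (β n) ≤ μ (α n))
    (hα : ∀ n, μ (α n) ≤ ENNReal.ofReal (Real.exp (-1))) : entH μ β ≤ entH μ α := by
  refine ENNReal.tsum_le_tsum fun n => ENNReal.ofReal_le_ofReal ?_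
  have hαn : μ (α n) ≠ ⊤ := ne_top_of_le_ne_top ENNReal.ofReal_ne_top (hα n)
  exact negMulLog_le_negMulLog_of_le_exp_neg_one ENNReal.toReal_nonneg
    (ENNReal.toReal_mono hαn (hβα n)) (ENNReal.toReal_le_of_le_ofReal (Real.exp_pos _).le (hα n))

theorem entH_cons (μ : Measure X) (A : Set X) (α : ℕ → Set X) :
    entH μ (fun n => if n = 0 then A else α (n - 1)) =
      ENNReal.ofReal (Real.negMulLog (μ A).toReal) + entH μ α := by
  rw [entH, entH, tsum_eq_zero_add' ENNReal.summable]
  simp only [if_pos, Nat.add_one_ne_zero, if_false, Nat.add_sub_cancel]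

theorem entH_eq_sum_range_add_entH_nat_add (μ : Measure X) (α : ℕ → Set X) (N : ℕ) :
    entH μ α = ∑ n ∈ Finset.range N, ENNReal.ofReal (Real.negMulLog (μ (α n)).toReal) +
      entH μ (fun k => α (k + N)) :=
  (ENNReal.summable.sum_add_tsum_nat_add' (k := N)).symm

theorem tendsto_entH_inter_of_tendsto_measure {ι : Type*} {l : Filter ι} {μ : Measure X}
    [IsFiniteMeasure μ] {α : ℕ → Set X} (hαm : ∀ n, MeasurableSet (α n))
    (hαd : Pairwise (Disjoint on α)) (hαe : entH μ α ≠ ⊤) {S : ι → Set X}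
    (hS : Tendsto (fun i => μ (S i)) l (nhds 0)) :
    Tendsto (fun i => entH μ (fun n => S i ∩ α n)) l (nhds 0) := by
  rw [ENNReal.tendsto_nhds_zero]
  intro ε hε
  have hε2 : 0 < ε / 2 := ENNReal.half_pos hε.ne'
  have hmass : ∑' n, μ (α n) ≠ ⊤ := by
    rw [← measure_iUnion hαd hαm]
    exact measure_ne_top μ _
  obtain ⟨N, hNtail, hNsmall⟩ : ∃ N, entH μ (fun k => α (k + N)) ≤ ε / 2 ∧
      ∀ n ≥ N, μ (α n) ≤ ENNReal.ofReal (Real.exp (-1)) :=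
    ((ENNReal.tendsto_nhds_zero.1 (ENNReal.tendsto_sum_nat_add _ hαe) _ hε2).and
      (eventually_forall_ge_atTop.2 <| ENNReal.tendsto_nhds_zero.1
        (ENNReal.tendsto_atTop_zero_of_tsum_ne_top hmass) _ (by simp [Real.exp_pos]))).exists
  have hhead : Tendsto (fun i => ∑ n ∈ Finset.range N,
      ENNReal.ofReal (Real.negMulLog (μ (S i ∩ α n)).toReal)) l (nhds 0) := by
    simpa using tendsto_finsetSum (Finset.range N) fun n _ =>
      tendsto_ofReal_negMulLog_toReal ENNReal.zero_ne_top <|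
        tendsto_of_tendsto_of_tendsto_of_le_of_le tendsto_const_nhds hS (fun _ => zero_le)
          fun i => measure_mono inter_subset_left
  filter_upwards [ENNReal.tendsto_nhds_zero.1 hhead _ hε2] with i hi
  calc entH μ (fun n => S i ∩ α n)
      = ∑ n ∈ Finset.range N, ENNReal.ofReal (Real.negMulLog (μ (S i ∩ α n)).toReal) +
          entH μ (fun k => S i ∩ α (k + N)) := entH_eq_sum_range_add_entH_nat_add μ _ N
    _ ≤ ε / 2 + ε / 2 := by
      refine add_le_add hi (le_trans ?_ hNtail)
      exact entH_le_entH_of_le (fun k => measure_mono inter_subset_right)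
        fun k => hNsmall _ (Nat.le_add_left N k)
    _ = ε := ENNReal.add_halves ε

theorem stmt9 {X : Type*} [MeasurableSpace X] (μ : Measure X) [IsProbabilityMeasure μ]
    (α : ℕ → Set X) (hα : IsPart μ α) (hαe : entH μ α < ⊤) (ε : ℝ) (hε : 0 < ε) :
    ∃ δ : ℝ, 0 < δ ∧ ∀ XL XS : Set X, MeasurableSet XL → MeasurableSet XS →
      Disjoint XL XS → XL ∪ XS = Set.univ → μ XS < ENNReal.ofReal δ →
      entH μ (fun n => if n = 0 then XL else XS ∩ α (n - 1)) < ENNReal.ofReal ε := by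
  set l := comap (fun S : Set X => μ S) (nhds 0)
  have hmeas : Tendsto (fun S => μ S) l (nhds 0) := tendsto_comap
  have hcompl : Tendsto (fun S => 1 - μ S) l (nhds 1) := by
    simpa using ENNReal.Tendsto.sub tendsto_const_nhds hmeas (Or.inl ENNReal.one_ne_top)
  have hlarge : Tendsto (fun S => ENNReal.ofReal (Real.negMulLog (1 - μ S).toReal)) l
      (nhds 0) := by
    simpa using tendsto_ofReal_negMulLog_toReal ENNReal.one_ne_top hcompl
  have hsmall : Tendsto (fun S => entH μ (fun n => S ∩ α n)) l (nhds 0) :=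
    tendsto_entH_inter_of_tendsto_measure hα.1 hα.2.1 hαe.ne hmeas
  have hentH : Tendsto (fun S => ENNReal.ofReal (Real.negMulLog (1 - μ S).toReal) +
      entH μ (fun n => S ∩ α n)) l (nhds 0) := by
    simpa using hlarge.add hsmall
  obtain ⟨δ, hδ, hδε⟩ := exists_pos_of_eventually_comap_nhds_zero <|
    hentH.eventually (gt_mem_nhds (ENNReal.ofReal_pos.2 hε))
  refine ⟨δ, hδ, fun XL XS _ hmS hdisj hcover hXS => ?_⟩
  have hXL : XL = XSᶜ := IsCompl.eq_compl ⟨hdisj, codisjoint_iff.2 hcover⟩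
  rw [entH_cons μ XL (fun n => XS ∩ α n), hXL, prob_compl_eq_one_sub hmS]
  exact hδε XS hXS

end SoficEntropy
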